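/- Conditional drift of the branching weight: for 0 < z < 1, on the event that the memory contains at least one element below z at time n, the conditional expectation of W(z,n+1) − W(z,n) given the history up to time n equals −log(1−z) − 1. In particular, for z₀ = 1 − 1/e this drift is zero. -/

import Mathlib

open MeasureTheory ProbabilityTheory Finset

noncomputable section

/-- One step of the forgetting process: the new point `x` joins `S`; if `x` is strictly
larger than the current minimum of `S`, that minimum is removed. -/
def forgetStep (S : Finset ℝ) (x : ℝ) : Finset ℝ :=
  if h : S.Nonempty then
    if S.min' h < x then insert x (S.erase (S.min' h)) else insert x S
  else insert x S

/-- The memory after `n` steps, starting from the set `T`, with inputs `xs 0, xs 1, …`. -/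
def forgetMem (T : Finset ℝ) (xs : ℕ → ℝ) : ℕ → Finset ℝ
  | 0 => T
  | n + 1 => forgetStep (forgetMem T xs n) (xs n)

/-- `sCount xs x ℓ` : number of elements of the memory lying in `[0, x]` after `ℓ` steps,
starting from `S = {0}`. -/
def sCount (xs : ℕ → ℝ) (x : ℝ) (ℓ : ℕ) : ℕ :=
  ((forgetMem {0} xs ℓ).filter (· ≤ x)).card

/-- The branching weight `W(z,n) = Σ_{x ∈ S(z,n)} 1/(1-x)`, the sum over memory elements
strictly below `z` at time `n`. -/
def Wproc (xs : ℕ → ℝ) (z : ℝ) (n : ℕ) : ℝ :=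
  ∑ x ∈ (forgetMem {0} xs n).filter (· < z), 1 / (1 - x)

/-- `Z(z,n) = Σ_{k=1}^n W(z,k)·1{W(z,k-1)=0}`. -/
def Zproc (xs : ℕ → ℝ) (z : ℝ) (n : ℕ) : ℝ :=
  ∑ k ∈ Finset.range n, if Wproc xs z k = 0 then Wproc xs z (k + 1) else 0

/-- `X(z,n) = W(z,n) - Z(z,n)`. -/
def Xproc (xs : ℕ → ℝ) (z : ℝ) (n : ℕ) : ℝ :=
  Wproc xs z n - Zproc xs z n

/-- the minimum of the memory at time `n` (with junk value `0` if the memory were empty). -/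
def mminProc (xs : ℕ → ℝ) (n : ℕ) : ℝ :=
  (forgetMem {0} xs n).min.untopD 0

/-- the critical point `z₀ = 1 - 1/e`. -/
def critPoint : ℝ := 1 - (Real.exp 1)⁻¹

/-- The σ-algebra generated by the first `n` inputs `X 0, …, X (n-1)`. -/
def natSigma {Ω : Type*} [MeasurableSpace Ω] (X : ℕ → Ω → ℝ) (n : ℕ) : MeasurableSpace Ω :=
  ⨆ i ∈ Finset.range n, MeasurableSpace.comap (X i) inferInstance

/-- The natural filtration `F_n = σ(x_1, …, x_n)` of the input sequence. -/
def natFilt {Ω : Type*} [m0 : MeasurableSpace Ω] (X : ℕ → Ω → ℝ)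
    (hX : ∀ i, Measurable (X i)) : Filtration ℕ m0 where
  seq n := natSigma X n
  mono' n m hnm := biSup_mono fun i hi => Finset.mem_range.2 ((Finset.mem_range.1 hi).trans_le hnm)
  le' n := iSup₂_le fun i _ => measurable_iff_comap_le.1 (hX i)

/-- The input sequence is i.i.d. uniform on `[0,1]`. -/
def IsUnifIID {Ω : Type*} [MeasurableSpace Ω] (μ : Measure Ω) (X : ℕ → Ω → ℝ) : Prop :=
  (∀ i, Measurable (X i)) ∧
    iIndepFun X μ ∧
    ∀ i, Measure.map (X i) μ = volume.restrict (Set.Icc (0 : ℝ) 1)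

end

/-! Given the past, the memory `S` and its minimum `m` are fixed, while the next input `x` is
uniform on `[0,1]` and independent of them. By the increment formula the drift is
`∫₀¹ 1{x < z}/(1 - x) dx - P(x > m) · 1{m < z}/(1 - m) = -log(1 - z) - 1{m < z}`
(the finite set `S` is null for `x`), and `W(z,n) ≠ 0` forces `m < z`. -/

lemma forgetStep_nonempty (S : Finset ℝ) (x : ℝ) : (forgetStep S x).Nonempty := by
  unfold forgetStep
  split_ifs <;> exact Finset.insert_nonempty _ _

lemma forgetMem_nonempty {T : Finset ℝ} (hT : T.Nonempty) (xs : ℕ → ℝ) :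
    ∀ k, (forgetMem T xs k).Nonempty
  | 0 => hT
  | _ + 1 => forgetStep_nonempty _ _

lemma forgetStep_subset_insert (S : Finset ℝ) (x : ℝ) : forgetStep S x ⊆ insert x S := by
  unfold forgetStep
  split_ifs
  · exact Finset.insert_subset_insert _ (Finset.erase_subset _ _)
  all_goals exact subset_rfl

lemma sum_forgetStep (g : ℝ → ℝ) {S : Finset ℝ} (hS : S.Nonempty) (x : ℝ) :
    ∑ y ∈ forgetStep S x, g y =
      ∑ y ∈ S, g y + (if x ∈ S then 0 else g x) - (if S.min' hS < x then g (S.min' hS) else 0) := by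
  have hmin := S.min'_mem hS
  unfold forgetStep
  rw [dif_pos hS]
  by_cases hlt : S.min' hS < x
  · have hx : x ∈ S ↔ x ∈ S.erase (S.min' hS) := by simp [Finset.mem_erase, hlt.ne']
    have herase := Finset.sum_erase_add S g hmin
    by_cases hxS : x ∈ S
    · simp only [if_pos hlt, if_pos hxS, Finset.insert_eq_of_mem (hx.1 hxS)]
      linarith
    · simp only [if_pos hlt, if_neg hxS, Finset.sum_insert (mt hx.2 hxS)]
      linarith
  · by_cases hxS : x ∈ S
    · simp [hlt, hxS]
    · simp [hlt, hxS, Finset.sum_insert hxS, add_comm]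

lemma forgetMem_congr {T : Finset ℝ} {xs ys : ℕ → ℝ} :
    ∀ k, (∀ i < k, xs i = ys i) → forgetMem T xs k = forgetMem T ys k
  | 0, _ => rfl
  | k + 1, h => by
    simp only [forgetMem]
    rw [forgetMem_congr k fun i hi => h i (by omega), h k k.lt_succ_self]

lemma forall_mem_forgetMem {T : Finset ℝ} {xs : ℕ → ℝ} {p : ℝ → Prop} (hT : ∀ y ∈ T, p y)
    (hxs : ∀ i, p (xs i)) : ∀ k, ∀ y ∈ forgetMem T xs k, p y
  | 0 => hT
  | k + 1 => fun y hy => by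
    rcases Finset.mem_insert.1 (forgetStep_subset_insert _ _ hy) with rfl | hy
    exacts [hxs k, forall_mem_forgetMem hT hxs k y hy]

section Measurability

variable {α : Type*} [MeasurableSpace α] {T : Finset ℝ} {xs : α → ℕ → ℝ}

/-- The induction closes because membership of the new input and the events `min < t` are
themselves detected by such sums over the memory. -/
theorem measurable_sum_forgetMem (hT : T.Nonempty) (hxs : Measurable xs) (k : ℕ) :
    ∀ {g : α → ℝ → ℝ}, Measurable (Function.uncurry g) →
      Measurable fun a => ∑ y ∈ forgetMem T (xs a) k, g a y := by
  induction k with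
  | zero =>
    exact fun hg =>
      Finset.measurable_sum _ fun _ _ => hg.comp (measurable_id.prodMk measurable_const)
  | succ k ih =>
    intro g hg
    set S := fun a => forgetMem T (xs a) k
    set m := fun a => (S a).min' (forgetMem_nonempty hT (xs a) k)
    have hxk : Measurable fun a => xs a k := (measurable_pi_apply k).comp hxs
    have hmem : MeasurableSet {a | xs a k ∈ S a} := by
      have h := ih (g := fun a y => if y = xs a k then (1 : ℝ) else 0)
        (Measurable.ite (measurableSet_eq_fun measurable_snd (hxk.comp measurable_fst))
          measurable_const measurable_const)
      simp only [Finset.sum_ite_eq'] at h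
      convert h (measurableSet_singleton 1) using 1
      ext a
      by_cases ha : xs a k ∈ S a <;> simp [S, ha]
    have hm : Measurable m := by
      refine measurable_of_Iio fun t => ?_
      have h := ih (g := fun _ y => if y < t then (1 : ℝ) else 0)
        (Measurable.ite (measurableSet_lt measurable_snd measurable_const)
          measurable_const measurable_const)
      convert h (measurableSet_Ioi (a := (0 : ℝ))) using 1
      ext a
      simp only [Set.mem_preimage, Set.mem_Iio, Set.mem_Ioi, Finset.sum_boole, Nat.cast_pos,
        Finset.card_pos, Finset.filter_nonempty_iff]
      exact ⟨fun h => ⟨_, Finset.min'_mem _ _, h⟩,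
        fun ⟨y, hy, hyt⟩ => (Finset.min'_le _ y hy).trans_lt hyt⟩
    have hstep : ∀ a, ∑ y ∈ forgetMem T (xs a) (k + 1), g a y = ∑ y ∈ S a, g a y +
        (if xs a k ∈ S a then 0 else g a (xs a k)) - (if m a < xs a k then g a (m a) else 0) :=
      fun a => sum_forgetStep (g a) _ _
    simp only [hstep]
    refine ((ih hg).add (Measurable.ite hmem measurable_const ?_)).sub
      (Measurable.ite (measurableSet_lt hm hxk) ?_ measurable_const)
    · exact hg.comp (measurable_id.prodMk hxk)
    · exact hg.comp (measurable_id.prodMk hm)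

end Measurability

noncomputable def branchWeight (z : ℝ) : ℝ → ℝ := (Set.Iio z).indicator fun y => (1 - y)⁻¹

lemma measurable_branchWeight (z : ℝ) : Measurable (branchWeight z) :=
  (measurable_const.sub measurable_id).inv.indicator measurableSet_Iio

lemma branchWeight_nonneg {z : ℝ} (hz : z < 1) (y : ℝ) : 0 ≤ branchWeight z y := by
  unfold branchWeight
  by_cases hy : y < z
  · rw [Set.indicator_of_mem (Set.mem_Iio.2 hy)]
    exact inv_nonneg.2 (by linarith)
  · rw [Set.indicator_of_notMem (mt Set.mem_Iio.1 hy)]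

lemma branchWeight_le {z : ℝ} (hz : z < 1) (y : ℝ) : branchWeight z y ≤ (1 - z)⁻¹ := by
  unfold branchWeight
  by_cases hy : y < z
  · rw [Set.indicator_of_mem (Set.mem_Iio.2 hy)]
    exact inv_anti₀ (by linarith) (by linarith)
  · rw [Set.indicator_of_notMem (mt Set.mem_Iio.1 hy)]
    exact inv_nonneg.2 (by linarith)

lemma Wproc_eq_sum_branchWeight (xs : ℕ → ℝ) (z : ℝ) (n : ℕ) :
    Wproc xs z n = ∑ y ∈ forgetMem {0} xs n, branchWeight z y := by
  rw [Wproc, Finset.sum_filter]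
  exact Finset.sum_congr rfl fun y _ => by simp [branchWeight, Set.indicator_apply]

lemma measurable_Wproc (z : ℝ) (n : ℕ) : Measurable fun xs => Wproc xs z n := by
  simp only [Wproc_eq_sum_branchWeight]
  exact measurable_sum_forgetMem (Finset.singleton_nonempty 0) measurable_id n
    ((measurable_branchWeight z).comp measurable_snd)

lemma Wproc_congr {xs ys : ℕ → ℝ} (z : ℝ) {n : ℕ} (h : ∀ i < n, xs i = ys i) :
    Wproc xs z n = Wproc ys z n := by
  rw [Wproc, Wproc, forgetMem_congr n h]

lemma mminProc_eq_min' (xs : ℕ → ℝ) (n : ℕ) :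
    mminProc xs n =
      (forgetMem {0} xs n).min' (forgetMem_nonempty (Finset.singleton_nonempty 0) xs n) := by
  rw [mminProc, ← Finset.coe_min', WithTop.untopD_coe]

lemma mminProc_lt_of_Wproc_ne_zero {xs : ℕ → ℝ} {z : ℝ} {n : ℕ} (h : Wproc xs z n ≠ 0) :
    mminProc xs n < z := by
  obtain ⟨y, hy⟩ := Finset.nonempty_of_sum_ne_zero h
  rw [Finset.mem_filter] at hy
  rw [mminProc_eq_min']
  exact (Finset.min'_le _ y hy.1).trans_lt hy.2

lemma mminProc_nonneg {xs : ℕ → ℝ} (hxs : ∀ i, 0 ≤ xs i) (n : ℕ) : 0 ≤ mminProc xs n := by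
  rw [mminProc_eq_min']
  exact forall_mem_forgetMem (by simp) hxs n _ (Finset.min'_mem _ _)

lemma Wproc_update_succ_sub (v : ℕ → ℝ) (z x : ℝ) (n : ℕ) :
    Wproc (Function.update v n x) z (n + 1) - Wproc v z n =
      (if x ∈ forgetMem {0} v n then 0 else branchWeight z x) -
        (if mminProc v n < x then branchWeight z (mminProc v n) else 0) := by
  have hpast : forgetMem {0} (Function.update v n x) n = forgetMem {0} v n :=
    forgetMem_congr n fun i hi => Function.update_of_ne hi.ne _ _
  have hstep :
      forgetMem {0} (Function.update v n x) (n + 1) = forgetStep (forgetMem {0} v n) x := by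
    rw [forgetMem, hpast, Function.update_self]
  rw [Wproc_eq_sum_branchWeight, Wproc_eq_sum_branchWeight, hstep,
    sum_forgetStep _ (forgetMem_nonempty (Finset.singleton_nonempty 0) v n), mminProc_eq_min']
  ring

lemma abs_Wproc_update_succ_sub_le {z : ℝ} (hz : z < 1) (v : ℕ → ℝ) (x : ℝ) (n : ℕ) :
    |Wproc (Function.update v n x) z (n + 1) - Wproc v z n| ≤ (1 - z)⁻¹ := by
  have hC : 0 ≤ (1 - z)⁻¹ := inv_nonneg.2 (by linarith)
  rw [Wproc_update_succ_sub]
  apply abs_sub_le_of_nonneg_of_le <;> split_ifs <;>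
    first | exact le_rfl | exact hC | exact branchWeight_nonneg hz _ | exact branchWeight_le hz _

lemma integral_branchWeight {z : ℝ} (hz0 : 0 ≤ z) (hz1 : z < 1) :
    ∫ x, branchWeight z x ∂volume.restrict (Set.Icc 0 1) = -Real.log (1 - z) := by
  have hIco : Set.Iio z ∩ Set.Icc 0 1 = Set.Ico 0 z := by
    ext x
    simp only [Set.mem_inter_iff, Set.mem_Iio, Set.mem_Icc, Set.mem_Ico]
    constructor
    · rintro ⟨hxz, hx0, -⟩
      exact ⟨hx0, hxz⟩
    · rintro ⟨hx0, hxz⟩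
      exact ⟨hxz, hx0, by linarith⟩
  rw [branchWeight, integral_indicator measurableSet_Iio,
    Measure.restrict_restrict measurableSet_Iio, hIco, integral_Ico_eq_integral_Ioc,
    ← intervalIntegral.integral_of_le hz0, intervalIntegral.integral_comp_sub_left fun x => x⁻¹,
    sub_zero, integral_inv_of_pos (by linarith) one_pos, Real.log_div one_ne_zero (by linarith),
    Real.log_one, zero_sub]

lemma measureReal_restrict_Icc_Ioi {m : ℝ} (hm0 : 0 ≤ m) (hm1 : m ≤ 1) :
    (volume.restrict (Set.Icc (0 : ℝ) 1)).real (Set.Ioi m) = 1 - m := by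
  have hIoc : Set.Ioi m ∩ Set.Icc 0 1 = Set.Ioc m 1 := by
    ext x
    simp only [Set.mem_inter_iff, Set.mem_Ioi, Set.mem_Icc, Set.mem_Ioc]
    constructor
    · rintro ⟨hmx, -, hx1⟩
      exact ⟨hmx, hx1⟩
    · rintro ⟨hmx, hx1⟩
      exact ⟨hmx, by linarith, hx1⟩
  rw [measureReal_restrict_apply measurableSet_Ioi, hIoc, Real.volume_real_Ioc_of_le hm1]

lemma integral_increment {z m : ℝ} (hz0 : 0 ≤ z) (hz1 : z < 1) (hm : 0 ≤ m) (S : Finset ℝ) :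
    ∫ x, ((if x ∈ S then 0 else branchWeight z x) - (if m < x then branchWeight z m else 0))
        ∂volume.restrict (Set.Icc 0 1) = -Real.log (1 - z) - if m < z then 1 else 0 := by
  set ν := volume.restrict (Set.Icc (0 : ℝ) 1)
  have hint : Integrable (fun x => if x ∈ S then 0 else branchWeight z x) ν := by
    refine Integrable.of_bound ?_ (1 - z)⁻¹ (Filter.Eventually.of_forall fun x => ?_)
    · exact (Measurable.ite S.measurableSet measurable_const
        (measurable_branchWeight z)).aestronglyMeasurable
    · split_ifs
      · simpa using inv_nonneg.2 (by linarith : (0 : ℝ) ≤ 1 - z)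
      · rw [Real.norm_of_nonneg (branchWeight_nonneg hz1 x)]
        exact branchWeight_le hz1 x
  have hS : (fun x => if x ∈ S then 0 else branchWeight z x) =ᵐ[ν] branchWeight z := by
    have hnull : ν S = 0 := Measure.restrict_le_self _ |>.trans_eq
      (S.finite_toSet.measure_zero volume) |> nonpos_iff_eq_zero.1
    filter_upwards [measure_eq_zero_iff_ae_notMem.1 hnull] with x hx
    rw [if_neg (Finset.mem_coe.not.1 hx)]
  have hforget : (fun x => if m < x then branchWeight z m else 0) =
      (Set.Ioi m).indicator fun _ => branchWeight z m := by
    ext x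
    simp [Set.indicator_apply]
  rw [integral_sub hint ((integrable_const _).indicator measurableSet_Ioi |>.congr
      (Filter.EventuallyEq.of_eq hforget.symm)), integral_congr_ae hS,
    integral_branchWeight hz0 hz1, hforget, integral_indicator_const _ measurableSet_Ioi]
  split_ifs with hmz
  · rw [measureReal_restrict_Icc_Ioi hm (by linarith), branchWeight,
      Set.indicator_of_mem (Set.mem_Iio.2 hmz), smul_eq_mul, mul_inv_cancel₀ (by linarith)]
  · rw [branchWeight, Set.indicator_of_notMem (mt Set.mem_Iio.1 hmz), smul_zero]

lemma integral_Wproc_update_succ_sub {z : ℝ} (hz0 : 0 ≤ z) (hz1 : z < 1) {v : ℕ → ℝ}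
    (hv : ∀ i, 0 ≤ v i) (n : ℕ) :
    ∫ x, (Wproc (Function.update v n x) z (n + 1) - Wproc v z n)
        ∂volume.restrict (Set.Icc 0 1) = -Real.log (1 - z) - if mminProc v n < z then 1 else 0 := by
  simp only [Wproc_update_succ_sub]
  exact integral_increment hz0 hz1 (mminProc_nonneg hv n) _

lemma log_one_sub_critPoint : Real.log (1 - critPoint) = -1 := by
  rw [critPoint, sub_sub_cancel, Real.log_inv, Real.log_exp]

theorem condExp_comp_prod_ae_eq_integral_of_indepFun {α β γ F : Type*} {mα : MeasurableSpace α}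
    {mβ : MeasurableSpace β} [MeasurableSpace γ] [StandardBorelSpace γ] [Nonempty γ]
    [NormedAddCommGroup F] [NormedSpace ℝ F] [CompleteSpace F] {μ : Measure α}
    [IsProbabilityMeasure μ] {X : α → β} {Y : α → γ} (hX : Measurable X) (hY : Measurable Y)
    (hXY : IndepFun X Y μ) {f : β × γ → F} (hf : StronglyMeasurable f)
    (hf_int : Integrable (fun a => f (X a, Y a)) μ) :
    μ[fun a => f (X a, Y a) | mβ.comap X] =ᵐ[μ] fun a => ∫ y, f (X a, y) ∂μ.map Y := by
  have hcond : condDistrib Y X μ =ᵐ[μ.map X] Kernel.const β (μ.map Y) := by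
    refine condDistrib_ae_eq_of_measure_eq_compProd X hY.aemeasurable ?_
    rw [Measure.compProd_const,
      ← (indepFun_iff_map_prod_eq_prod_map_map hX.aemeasurable hY.aemeasurable).1 hXY]
  filter_upwards [condExp_prod_ae_eq_integral_condDistrib hX hY.aemeasurable hf hf_int,
    ae_of_ae_map hX.aemeasurable hcond] with a hae hconst
  rw [hae, hconst, Kernel.const_apply]

section Inputs

variable {Ω : Type*} {X : ℕ → Ω → ℝ}

def pastInputs (X : ℕ → Ω → ℝ) (n : ℕ) (ω : Ω) : ℕ → ℝ := fun i => if i < n then X i ω else 0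

lemma pastInputs_nonneg {ω : Ω} (h : ∀ i, 0 ≤ X i ω) (n : ℕ) (i : ℕ) :
    0 ≤ pastInputs X n ω i := by
  unfold pastInputs
  split_ifs
  exacts [h i, le_rfl]

lemma update_pastInputs (n : ℕ) (ω : Ω) :
    Function.update (pastInputs X n ω) n (X n ω) = pastInputs X (n + 1) ω := by
  ext i
  rcases lt_trichotomy i n with h | rfl | h
  · simp [pastInputs, h, h.ne, Nat.lt_succ_of_lt h]
  · simp [pastInputs]
  · simp [pastInputs, h.ne', h.not_gt, (Nat.succ_le_of_lt h).not_gt]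

lemma Wproc_pastInputs (z : ℝ) (n : ℕ) (ω : Ω) :
    Wproc (pastInputs X n ω) z n = Wproc (fun i => X i ω) z n :=
  Wproc_congr z fun _ hi => if_pos hi

variable [MeasurableSpace Ω]

lemma measurable_pastInputs (hX : ∀ i, Measurable (X i)) (n : ℕ) :
    Measurable (pastInputs X n) :=
  measurable_pi_lambda _ fun i => Measurable.ite (by simp) (hX i) measurable_const

lemma natSigma_eq_comap_pastInputs (n : ℕ) :
    natSigma X n = MeasurableSpace.comap (pastInputs X n) inferInstance := by
  have hmeas : Measurable[natSigma X n] (pastInputs X n) := by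
    refine @measurable_pi_lambda Ω ℕ (fun _ => ℝ) (natSigma X n) _ _ fun i => ?_
    by_cases hi : i < n
    · simp only [pastInputs, if_pos hi]
      exact (comap_measurable (X i)).mono (le_iSup₂ (f := fun j (_ : j ∈ Finset.range n) =>
        MeasurableSpace.comap (X j) inferInstance) i (Finset.mem_range.2 hi)) le_rfl
    · simp only [pastInputs, if_neg hi]
      exact measurable_const
  refine le_antisymm (iSup₂_le fun i hi => ?_) hmeas.comap_le
  have hXi : X i = (fun v : ℕ → ℝ => v i) ∘ pastInputs X n := by
    ext ω
    simp [pastInputs, Finset.mem_range.1 hi]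
  rw [hXi, ← MeasurableSpace.comap_comp]
  exact MeasurableSpace.comap_mono (measurable_pi_apply i).comap_le

lemma indepFun_pastInputs {μ : Measure Ω} (hX : ∀ i, Measurable (X i)) (hindep : iIndepFun X μ)
    (n : ℕ) : IndepFun (pastInputs X n) (X n) μ := by
  have hpast : Measurable fun g : (Finset.range n → ℝ) => fun i => if h : i < n then
      g ⟨i, Finset.mem_range.2 h⟩ else 0 :=
    measurable_pi_lambda _ fun i => by
      by_cases h : i < n <;> simp only [h, dite_true, dite_false]
      exacts [measurable_pi_apply _, measurable_const]
  have hlast : Measurable fun g : (({n} : Finset ℕ) → ℝ) => g ⟨n, Finset.mem_singleton_self n⟩ :=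
    measurable_pi_apply _
  convert (hindep.indepFun_finset (Finset.range n) {n} (by simp) hX).comp hpast hlast using 1
  · ext ω i
    by_cases h : i < n <;> simp [pastInputs, h]
  · rfl

lemma ae_forall_nonneg {μ : Measure Ω} (hX : ∀ i, Measurable (X i))
    (hunif : ∀ i, μ.map (X i) = volume.restrict (Set.Icc (0 : ℝ) 1)) :
    ∀ᵐ ω ∂μ, ∀ i, 0 ≤ X i ω :=
  ae_all_iff.2 fun i => (ae_map_iff (hX i).aemeasurable measurableSet_Ici).1 <| by
    rw [hunif i]
    filter_upwards [ae_restrict_mem measurableSet_Icc] with x hx using hx.1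

end Inputs

/-- Conditional drift of the branching weight: for `0 < z < 1`, on the event
that the memory contains an element below `z` at time `n` (i.e. `W(z,n) ≠ 0`), the conditional
expectation of `W(z,n+1) − W(z,n)` given `F_n` equals `−log(1−z) − 1`. In particular for
`z₀ = 1 − 1/e` this drift is zero. -/
theorem branching_weight_conditional_drift {Ω : Type*} [MeasurableSpace Ω] (μ : Measure Ω)
    [IsProbabilityMeasure μ] (X : ℕ → Ω → ℝ)
    (hmeas : ∀ i, Measurable (X i))
    (hindep : iIndepFun X μ)
    (hunif : ∀ i, Measure.map (X i) μ = volume.restrict (Set.Icc (0 : ℝ) 1))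
    (z : ℝ) (hz : z ∈ Set.Ioo (0 : ℝ) 1) (n : ℕ) :
    (∀ᵐ ω ∂μ, Wproc (fun i => X i ω) z n ≠ 0 →
        (μ[fun ω' => Wproc (fun i => X i ω') z (n + 1) - Wproc (fun i => X i ω') z n |
            natSigma X n]) ω = -Real.log (1 - z) - 1) ∧
      -Real.log (1 - critPoint) - 1 = 0 := by
  obtain ⟨hz0, hz1⟩ := hz
  refine ⟨?_, by rw [log_one_sub_critPoint]; ring⟩
  set G : (ℕ → ℝ) × ℝ → ℝ := fun p => Wproc (Function.update p.1 n p.2) z (n + 1) - Wproc p.1 z n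
  have hG : Measurable G :=
    ((measurable_Wproc z (n + 1)).comp measurable_update').sub
      ((measurable_Wproc z n).comp measurable_fst)
  have hincr : (fun ω => Wproc (fun i => X i ω) z (n + 1) - Wproc (fun i => X i ω) z n) =
      fun ω => G (pastInputs X n ω, X n ω) := by
    ext ω
    simp only [G, update_pastInputs, Wproc_pastInputs]
  have hint : Integrable (fun ω => G (pastInputs X n ω, X n ω)) μ :=
    .of_bound (hG.comp ((measurable_pastInputs hmeas n).prodMk (hmeas n))).aestronglyMeasurable
      (1 - z)⁻¹ (.of_forall fun ω => abs_Wproc_update_succ_sub_le hz1 _ _ n)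
  rw [hincr, natSigma_eq_comap_pastInputs]
  filter_upwards [condExp_comp_prod_ae_eq_integral_of_indepFun (measurable_pastInputs hmeas n)
    (hmeas n) (indepFun_pastInputs hmeas hindep n) hG.stronglyMeasurable hint,
    ae_forall_nonneg hmeas hunif] with ω hcond hnonneg hW
  rw [← Wproc_pastInputs] at hW
  rw [hcond, hunif n, integral_Wproc_update_succ_sub hz0.le hz1 (pastInputs_nonneg hnonneg n) n,
    if_pos (mminProc_lt_of_Wproc_ne_zero hW)]
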